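/- arXiv:1409.5606 — 2 statements merged into one kernel-verified Lean document; each statement's English description precedes it below -/
import Mathlib

section
/- Let I₁, I₂ ⊆ {1,…,N} be disjoint index sets and suppose Φ satisfies the RIP of order |I₁|+|I₂| with constant δ_{|I₁|+|I₂|} < 1. Then for any vector x ∈ ℝ^{|I₂|}, ‖Φ_{I₁}' Φ_{I₂} x‖₂ ≤ δ_{|I₁|+|I₂|} ‖x‖₂. -/
open Matrix Finset

noncomputable def l2 {n : Type*} [Fintype n] (x : n → ℝ) : ℝ :=
  Real.sqrt (∑ i, (x i) ^ 2)

def Sparse {N : ℕ} (K : ℕ) (x : Fin N → ℝ) : Prop :=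
  (Finset.univ.filter (fun i => x i ≠ 0)).card ≤ K

def RIP {M N : ℕ} (Φ : Matrix (Fin M) (Fin N) ℝ) (K : ℕ) (δ : ℝ) : Prop :=
  ∀ x : Fin N → ℝ, Sparse K x →
    (1 - δ) * (l2 x) ^ 2 ≤ (l2 (Φ.mulVec x)) ^ 2 ∧
    (l2 (Φ.mulVec x)) ^ 2 ≤ (1 + δ) * (l2 x) ^ 2

def colSub {M N : ℕ} (Φ : Matrix (Fin M) (Fin N) ℝ) (S : Finset (Fin N)) :
    Matrix (Fin M) {i // i ∈ S} ℝ := fun r c => Φ r c.1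

noncomputable def resid {M N : ℕ} (Φ : Matrix (Fin M) (Fin N) ℝ) (S : Finset (Fin N))
    (y : Fin M → ℝ) : Fin M → ℝ :=
  y - (colSub Φ S).mulVec
    ((((colSub Φ S)ᵀ * colSub Φ S)⁻¹).mulVec ((colSub Φ S)ᵀ.mulVec y))

def restr {N : ℕ} (x : Fin N → ℝ) (S : Finset (Fin N)) : {i // i ∈ S} → ℝ :=
  fun i => x i.1

lemma l2_sq {n : Type*} [Fintype n] (x : n → ℝ) : l2 x ^ 2 = ∑ i, (x i) ^ 2 := by
  rw [l2, Real.sq_sqrt]; positivity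

lemma l2_nonneg {n : Type*} [Fintype n] (x : n → ℝ) : 0 ≤ l2 x := Real.sqrt_nonneg _

lemma l2_eq_zero {n : Type*} [Fintype n] {x : n → ℝ} (h : l2 x = 0) : ∀ i, x i = 0 := by
  intro i
  have h2 : ∑ j, (x j) ^ 2 = 0 := by
    have := l2_sq x
    rw [h] at this; simpa using this.symm
  have := (Finset.sum_eq_zero_iff_of_nonneg (fun j _ => sq_nonneg (x j))).1 h2 i (mem_univ i)
  exact pow_eq_zero_iff (by norm_num) |>.1 this

lemma sum_extv_gen {N : ℕ} (S : Finset (Fin N)) (g : {i // i ∈ S} → ℝ) :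
    (∑ x : Fin N, if h : x ∈ S then g ⟨x, h⟩ else 0) = ∑ c : {i // i ∈ S}, g c := by
  rw [Finset.univ_eq_attach,
    ← Finset.sum_subset (Finset.subset_univ S) (f := fun x => if h : x ∈ S then g ⟨x, h⟩ else 0)
      (by intro i _ hi; simp [hi]),
    ← Finset.sum_attach S (fun x => if h : x ∈ S then g ⟨x, h⟩ else 0)]
  exact Finset.sum_congr rfl (fun c _ => by simp)

def extv {N : ℕ} (S : Finset (Fin N)) (y : {i // i ∈ S} → ℝ) : Fin N → ℝ :=
  fun i => if h : i ∈ S then y ⟨i, h⟩ else 0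

lemma mulVec_extv {M N : ℕ} (Φ : Matrix (Fin M) (Fin N) ℝ) (S : Finset (Fin N))
    (y : {i // i ∈ S} → ℝ) : Φ.mulVec (extv S y) = (colSub Φ S).mulVec y := by
  funext r
  simp only [mulVec, dotProduct, extv, colSub, mul_dite, mul_zero]
  exact sum_extv_gen S (fun c => Φ r c.1 * y c)

lemma sum_sq_extv {N : ℕ} (S : Finset (Fin N)) (y : {i // i ∈ S} → ℝ) :
    ∑ i, (extv S y i) ^ 2 = ∑ c, (y c) ^ 2 := by
  have : ∀ i : Fin N, (extv S y i) ^ 2 = if h : i ∈ S then (y ⟨i, h⟩) ^ 2 else 0 := by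
    intro i; by_cases h : i ∈ S <;> simp [extv, h]
  simp_rw [this]
  exact sum_extv_gen S (fun c => (y c) ^ 2)

lemma l2_extv {N : ℕ} (S : Finset (Fin N)) (y : {i // i ∈ S} → ℝ) :
    l2 (extv S y) = l2 y := by
  rw [l2, l2, sum_sq_extv]

lemma sparse_of_support {N K : ℕ} {x : Fin N → ℝ} {S : Finset (Fin N)}
    (h : ∀ i, x i ≠ 0 → i ∈ S) (hc : S.card ≤ K) : Sparse K x :=
  le_trans (Finset.card_le_card (fun i hi => h i (by simpa using (mem_filter.1 hi).2))) hc

lemma core_bound {M N K : ℕ} (Φ : Matrix (Fin M) (Fin N) ℝ) (δ : ℝ)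
    (hRIP : RIP Φ K δ) (u v : Fin N → ℝ)
    (hs : Sparse K (u + v)) (hd : Sparse K (u - v))
    (horth : ∑ i, u i * v i = 0) :
    |Φ.mulVec u ⬝ᵥ Φ.mulVec v| ≤ δ / 2 * ((∑ i, (u i) ^ 2) + ∑ i, (v i) ^ 2) := by
  obtain ⟨h1, h2⟩ := hRIP _ hs
  obtain ⟨h3, h4⟩ := hRIP _ hd
  set S : ℝ := (∑ i, (u i) ^ 2) + ∑ i, (v i) ^ 2 with hS
  clear_value S
  have e1 : l2 (u + v) ^ 2 = S := by
    rw [l2_sq]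
    have : ∀ i, ((u + v) i) ^ 2 = (u i) ^ 2 + (v i) ^ 2 + 2 * (u i * v i) := by
      intro i; simp [Pi.add_apply]; ring
    simp_rw [this]
    rw [Finset.sum_add_distrib, Finset.sum_add_distrib, ← Finset.mul_sum, horth, hS]; ring
  have e2 : l2 (u - v) ^ 2 = S := by
    rw [l2_sq]
    have : ∀ i, ((u - v) i) ^ 2 = (u i) ^ 2 + (v i) ^ 2 - 2 * (u i * v i) := by
      intro i; simp [Pi.sub_apply]; ring
    simp_rw [this]
    rw [Finset.sum_sub_distrib]
    rw [Finset.sum_add_distrib, ← Finset.mul_sum, horth, hS]; ring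
  have f1 : l2 (Φ.mulVec (u + v)) ^ 2
      = l2 (Φ.mulVec u) ^ 2 + l2 (Φ.mulVec v) ^ 2 + 2 * (Φ.mulVec u ⬝ᵥ Φ.mulVec v) := by
    rw [Matrix.mulVec_add, l2_sq, l2_sq, l2_sq]
    simp only [dotProduct, Pi.add_apply]
    have : ∀ i, (Φ.mulVec u i + Φ.mulVec v i) ^ 2
        = (Φ.mulVec u i) ^ 2 + (Φ.mulVec v i) ^ 2 + 2 * (Φ.mulVec u i * Φ.mulVec v i) := by
      intro i; ring
    simp_rw [this]
    rw [Finset.sum_add_distrib, Finset.sum_add_distrib, ← Finset.mul_sum]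
  have f2 : l2 (Φ.mulVec (u - v)) ^ 2
      = l2 (Φ.mulVec u) ^ 2 + l2 (Φ.mulVec v) ^ 2 - 2 * (Φ.mulVec u ⬝ᵥ Φ.mulVec v) := by
    rw [Matrix.mulVec_sub, l2_sq, l2_sq, l2_sq]
    simp only [dotProduct, Pi.sub_apply]
    have : ∀ i, (Φ.mulVec u i - Φ.mulVec v i) ^ 2
        = (Φ.mulVec u i) ^ 2 + (Φ.mulVec v i) ^ 2 - 2 * (Φ.mulVec u i * Φ.mulVec v i) := by
      intro i; ring
    simp_rw [this]
    rw [Finset.sum_sub_distrib, Finset.sum_add_distrib, ← Finset.mul_sum]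
  rw [e1] at h1 h2
  rw [e2] at h3 h4
  rw [f1] at h2
  rw [f2] at h3
  rw [abs_le]
  constructor
  · rw [f2] at h4; rw [f1] at h1; nlinarith [h1, h4]
  · nlinarith [h2, h3]

lemma inner_bound {M N : ℕ} (Φ : Matrix (Fin M) (Fin N) ℝ)
    (I₁ I₂ : Finset (Fin N)) (hdisj : Disjoint I₁ I₂) (δ : ℝ) (hδ0 : 0 < δ)
    (hRIP : RIP Φ (I₁.card + I₂.card) δ)
    (y : {i // i ∈ I₁} → ℝ) (x : {i // i ∈ I₂} → ℝ) :
    |(colSub Φ I₁).mulVec y ⬝ᵥ (colSub Φ I₂).mulVec x| ≤ δ * l2 y * l2 x := by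
  have claim : ∀ (y : {i // i ∈ I₁} → ℝ) (x : {i // i ∈ I₂} → ℝ),
      |(colSub Φ I₁).mulVec y ⬝ᵥ (colSub Φ I₂).mulVec x|
        ≤ δ / 2 * (l2 y ^ 2 + l2 x ^ 2) := by
    intro y x
    set u := extv I₁ y with hu
    set v := extv I₂ x with hv
    have hcard : (I₁ ∪ I₂).card ≤ I₁.card + I₂.card :=
      le_of_eq (Finset.card_union_of_disjoint hdisj)
    have hsupp : ∀ i : Fin N, (u i ≠ 0 ∨ v i ≠ 0) → i ∈ I₁ ∪ I₂ := by
      intro i hi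
      rcases hi with h | h
      · refine Finset.mem_union_left _ ?_
        by_contra h'
        exact h (by simp [hu, extv, h'])
      · refine Finset.mem_union_right _ ?_
        by_contra h'
        exact h (by simp [hv, extv, h'])
    have hs : Sparse (I₁.card + I₂.card) (u + v) :=
      sparse_of_support (fun i hi => hsupp i (by
        by_contra hc; push_neg at hc
        exact hi (by simp [Pi.add_apply, hc.1, hc.2]))) hcard
    have hd : Sparse (I₁.card + I₂.card) (u - v) :=
      sparse_of_support (fun i hi => hsupp i (by
        by_contra hc; push_neg at hc
        exact hi (by simp [Pi.sub_apply, hc.1, hc.2]))) hcard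
    have horth : ∑ i, u i * v i = 0 := by
      apply Finset.sum_eq_zero
      intro i _
      by_cases h : i ∈ I₁
      · have : i ∉ I₂ := Finset.disjoint_left.1 hdisj h
        simp [hv, extv, this]
      · simp [hu, extv, h]
    have := core_bound Φ δ hRIP u v hs hd horth
    rw [mulVec_extv, mulVec_extv] at this
    calc |(colSub Φ I₁).mulVec y ⬝ᵥ (colSub Φ I₂).mulVec x|
        ≤ δ / 2 * ((∑ i, (u i) ^ 2) + ∑ i, (v i) ^ 2) := this
      _ = δ / 2 * (l2 y ^ 2 + l2 x ^ 2) := by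
          rw [hu, hv, sum_sq_extv, sum_sq_extv, l2_sq, l2_sq]
  by_cases hy : l2 y = 0
  · have hz : (colSub Φ I₁).mulVec y = 0 := by
      funext r; simp [mulVec, dotProduct, l2_eq_zero hy]
    rw [hz, zero_dotProduct, abs_zero]
    exact mul_nonneg (mul_nonneg hδ0.le (l2_nonneg y)) (l2_nonneg x)
  by_cases hx : l2 x = 0
  · have hz : (colSub Φ I₂).mulVec x = 0 := by
      funext r; simp [mulVec, dotProduct, l2_eq_zero hx]
    rw [hz, dotProduct_zero, abs_zero]
    exact mul_nonneg (mul_nonneg hδ0.le (l2_nonneg y)) (l2_nonneg x)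
  · have hy' : 0 < l2 y := lt_of_le_of_ne (l2_nonneg y) (Ne.symm hy)
    have hx' : 0 < l2 x := lt_of_le_of_ne (l2_nonneg x) (Ne.symm hx)
    have key := claim (l2 x • y) (l2 y • x)
    have e1 : l2 (l2 x • y) ^ 2 = l2 x ^ 2 * l2 y ^ 2 := by
      rw [l2_sq (l2 x • y), l2_sq y]
      simp_rw [Pi.smul_apply, smul_eq_mul, mul_pow]
      rw [← Finset.mul_sum]
    have e2 : l2 (l2 y • x) ^ 2 = l2 y ^ 2 * l2 x ^ 2 := by
      rw [l2_sq (l2 y • x), l2_sq x]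
      simp_rw [Pi.smul_apply, smul_eq_mul, mul_pow]
      rw [← Finset.mul_sum]
    rw [Matrix.mulVec_smul, Matrix.mulVec_smul, smul_dotProduct, dotProduct_smul,
      smul_eq_mul, smul_eq_mul, ← mul_assoc, abs_mul, abs_mul,
      abs_of_nonneg (l2_nonneg x), abs_of_nonneg (l2_nonneg y), e1, e2] at key
    have h2 : l2 x * l2 y * |(colSub Φ I₁).mulVec y ⬝ᵥ (colSub Φ I₂).mulVec x|
        ≤ l2 x * l2 y * (δ * l2 y * l2 x) := by
      calc l2 x * l2 y * |(colSub Φ I₁).mulVec y ⬝ᵥ (colSub Φ I₂).mulVec x|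
          ≤ δ / 2 * (l2 x ^ 2 * l2 y ^ 2 + l2 y ^ 2 * l2 x ^ 2) := key
        _ = l2 x * l2 y * (δ * l2 y * l2 x) := by ring
    exact le_of_mul_le_mul_left h2 (mul_pos hx' hy')

theorem rip_disjoint_bound {M N : ℕ} (Φ : Matrix (Fin M) (Fin N) ℝ)
    (I₁ I₂ : Finset (Fin N)) (hdisj : Disjoint I₁ I₂)
    (δ : ℝ) (hδ0 : 0 < δ) (hδ1 : δ < 1)
    (hRIP : RIP Φ (I₁.card + I₂.card) δ) (x : {i // i ∈ I₂} → ℝ) :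
    l2 (((colSub Φ I₁)ᵀ * colSub Φ I₂).mulVec x) ≤ δ * l2 x := by
  set A := colSub Φ I₁ with hA
  set B := colSub Φ I₂ with hB
  set w := (Aᵀ * B).mulVec x with hwdef
  have hw : w = Aᵀ.mulVec (B.mulVec x) := by
    rw [hwdef, ← Matrix.mulVec_mulVec]
  have key : l2 w ^ 2 = A.mulVec w ⬝ᵥ B.mulVec x := by
    rw [l2_sq]
    have h1 : l2 w ^ 2 = w ⬝ᵥ w := by rw [l2_sq]; simp [dotProduct, sq]
    calc ∑ i, (w i) ^ 2 = w ⬝ᵥ w := by simp [dotProduct, sq]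
      _ = w ⬝ᵥ Aᵀ.mulVec (B.mulVec x) := by rw [← hw]
      _ = Aᵀ.mulVec (B.mulVec x) ⬝ᵥ w := dotProduct_comm _ _
      _ = (B.mulVec x ᵥ* A) ⬝ᵥ w := by rw [Matrix.mulVec_transpose]
      _ = B.mulVec x ⬝ᵥ A.mulVec w := (Matrix.dotProduct_mulVec _ _ _).symm
      _ = A.mulVec w ⬝ᵥ B.mulVec x := dotProduct_comm _ _
  have hib := inner_bound Φ I₁ I₂ hdisj δ hδ0 hRIP w x
  have hle : l2 w ^ 2 ≤ δ * l2 w * l2 x := by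
    calc l2 w ^ 2 = A.mulVec w ⬝ᵥ B.mulVec x := key
      _ ≤ |A.mulVec w ⬝ᵥ B.mulVec x| := le_abs_self _
      _ ≤ δ * l2 w * l2 x := hib
  rcases eq_or_lt_of_le (l2_nonneg w) with h | h
  · rw [← h]
    exact mul_nonneg hδ0.le (l2_nonneg x)
  · have : l2 w * l2 w ≤ l2 w * (δ * l2 x) := by nlinarith [hle]
    exact le_of_mul_le_mul_left (by linarith [this]) h
end

section
/- Let y = Φx where x is K-sparse with support T, and let S ⊂ T. Then γ := max_{u ∈ T^c} |φ_u' r_S| satisfies γ ≤ (δ_{K+1}/(1 - δ_K)) ‖x_{T∖S}‖₂, where r_S = P_S^⊥ y is the residual of the orthogonal projection of y onto the complement of the column span of Φ_S. -/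
open Matrix Finset

/-!
Since `Φ_S' r_S = 0` and `y = Φ x`, the residual is `r_S = Φ v`, where `v` is `x` minus the
least-squares coefficients on `S` extended by zero; `v` is supported on `T` and agrees with `x`
on `T ∖ S`. As `u ∉ T`, the unit vector `e_u` is orthogonal to `v` with joint support of size
`K + 1`, so the polarized RIP gives `|φ_u' Φ v| ≤ δ_{K+1} ‖v‖`. Splitting `v = v_{T∖S} + v_S`,
we have `Φ v ⟂ Φ v_S`, so the polarized RIP of order `K` gives
`|⟨v, v_S⟩| ≤ δ_K ‖v‖ ‖v_S‖ ≤ δ_K ‖v‖²`, whence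
`‖v‖² = ⟨v, v_{T∖S}⟩ + ⟨v, v_S⟩ ≤ ‖v‖ ‖x_{T∖S}‖ + δ_K ‖v‖²`.
-/

section L2

variable {n : Type*} [Fintype n]

lemma l2_nonneg_s5 (v : n → ℝ) : 0 ≤ l2 v := Real.sqrt_nonneg _

lemma l2_sq_s5 (v : n → ℝ) : l2 v ^ 2 = v ⬝ᵥ v := by
  rw [l2, Real.sq_sqrt (by positivity)]
  simp only [dotProduct, sq]

@[simp]
lemma l2_zero : l2 (0 : n → ℝ) = 0 := by simp [l2]

lemma eq_zero_of_l2_eq_zero {v : n → ℝ} (h : l2 v = 0) : v = 0 :=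
  dotProduct_self_eq_zero.1 (by rw [← l2_sq_s5, h, sq, zero_mul])

lemma l2_smul {c : ℝ} (hc : 0 ≤ c) (v : n → ℝ) : l2 (c • v) = c * l2 v := by
  simp only [l2, Pi.smul_apply, smul_eq_mul, mul_pow, ← Finset.mul_sum]
  rw [Real.sqrt_mul (sq_nonneg c), Real.sqrt_sq hc]

lemma dotProduct_le_l2_mul_l2 (v w : n → ℝ) : v ⬝ᵥ w ≤ l2 v * l2 w :=
  Real.sum_mul_le_sqrt_mul_sqrt _ _ _

lemma l2_single_one [DecidableEq n] (u : n) : l2 (Pi.single u (1 : ℝ)) = 1 := by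
  have h : l2 (Pi.single u (1 : ℝ)) ^ 2 = 1 := by
    rw [l2_sq_s5, single_dotProduct, Pi.single_eq_same, one_mul]
  exact (pow_eq_one_iff_of_nonneg (l2_nonneg_s5 _) two_ne_zero).1 h

end L2

section ExtendByZero

variable {ι : Type*} [DecidableEq ι]

def extendByZero (S : Finset ι) (w : {i // i ∈ S} → ℝ) : ι → ℝ :=
  fun i => if h : i ∈ S then w ⟨i, h⟩ else 0

lemma extendByZero_of_notMem {S : Finset ι} (w : {i // i ∈ S} → ℝ) {i : ι} (h : i ∉ S) :
    extendByZero S w i = 0 :=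
  dif_neg h

lemma sum_extendByZero [Fintype ι] {S : Finset ι} (w : {i // i ∈ S} → ℝ) (f : ι → ℝ → ℝ)
    (hf : ∀ i, f i 0 = 0) : ∑ i, f i (extendByZero S w i) = ∑ i : {i // i ∈ S}, f i (w i) := by
  rw [← Finset.sum_subset (Finset.subset_univ S)
    (fun i _ hi => by rw [extendByZero_of_notMem w hi, hf]), ← Finset.sum_coe_sort S]
  exact Finset.sum_congr rfl fun i _ => by rw [extendByZero, dif_pos i.2]

lemma l2_extendByZero [Fintype ι] (S : Finset ι) (w : {i // i ∈ S} → ℝ) :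
    l2 (extendByZero S w) = l2 w := by
  rw [l2, l2, sum_extendByZero w (fun _ t => t ^ 2) (fun _ => zero_pow two_ne_zero)]

end ExtendByZero

section Restriction

variable {M N : ℕ}

lemma l2_restr_le (v : Fin N → ℝ) (S : Finset (Fin N)) : l2 (restr v S) ≤ l2 v := by
  refine Real.sqrt_le_sqrt ?_
  change ∑ i : {i // i ∈ S}, v i ^ 2 ≤ _
  rw [Finset.sum_coe_sort S (fun i => v i ^ 2)]
  exact Finset.sum_le_univ_sum_of_nonneg fun i => sq_nonneg (v i)

lemma extendByZero_restr_add_extendByZero_restr {S T : Finset (Fin N)} {v : Fin N → ℝ}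
    (hv : ∀ i ∉ T, v i = 0) :
    extendByZero (T \ S) (restr v (T \ S)) + extendByZero S (restr v S) = v := by
  funext i
  by_cases hiS : i ∈ S
  · simp [extendByZero, restr, hiS]
  · by_cases hiT : i ∈ T
    · simp [extendByZero, restr, hiS, hiT]
    · simp [extendByZero, hiS, hiT, hv i hiT]

lemma mulVec_extendByZero (Φ : Matrix (Fin M) (Fin N) ℝ) (S : Finset (Fin N))
    (w : {i // i ∈ S} → ℝ) : Φ *ᵥ extendByZero S w = colSub Φ S *ᵥ w := by
  funext r
  exact sum_extendByZero w (fun j t => Φ r j * t) (fun _ => mul_zero _)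

end Restriction

section RIP

variable {M N K : ℕ} {Φ : Matrix (Fin M) (Fin N) ℝ} {δ : ℝ}

lemma sparse_of_support_subset {U : Finset (Fin N)} {a : Fin N → ℝ}
    (ha : ∀ i ∉ U, a i = 0) (hU : U.card ≤ K) : Sparse K a :=
  (Finset.card_le_card fun i hi => by
    by_contra h
    exact (Finset.mem_filter.1 hi).2 (ha i h)).trans hU

lemma RIP.abs_dotProduct_sub_le_sq_add_sq (hR : RIP Φ K δ) {U : Finset (Fin N)}
    (hU : U.card ≤ K) {a b : Fin N → ℝ} (ha : ∀ i ∉ U, a i = 0) (hb : ∀ i ∉ U, b i = 0) :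
    |Φ *ᵥ a ⬝ᵥ Φ *ᵥ b - a ⬝ᵥ b| ≤ δ * (l2 a ^ 2 + l2 b ^ 2) / 2 := by
  obtain ⟨hadd₁, hadd₂⟩ :=
    hR _ (sparse_of_support_subset (fun i hi => by simp [ha i hi, hb i hi]) hU : Sparse K (a + b))
  obtain ⟨hsub₁, hsub₂⟩ :=
    hR _ (sparse_of_support_subset (fun i hi => by simp [ha i hi, hb i hi]) hU : Sparse K (a - b))
  simp only [l2_sq_s5, mulVec_add, mulVec_sub, dotProduct_add, add_dotProduct, dotProduct_sub,
    sub_dotProduct, dotProduct_comm b a, dotProduct_comm (Φ *ᵥ b) (Φ *ᵥ a)] at *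
  rw [abs_sub_le_iff]
  constructor <;> nlinarith

lemma RIP.abs_dotProduct_sub_le_mul (hR : RIP Φ K δ) {U : Finset (Fin N)}
    (hU : U.card ≤ K) {a b : Fin N → ℝ} (ha : ∀ i ∉ U, a i = 0) (hb : ∀ i ∉ U, b i = 0) :
    |Φ *ᵥ a ⬝ᵥ Φ *ᵥ b - a ⬝ᵥ b| ≤ δ * (l2 a * l2 b) := by
  rcases (l2_nonneg_s5 a).eq_or_lt with ha0 | ha0
  · simp [eq_zero_of_l2_eq_zero ha0.symm]
  rcases (l2_nonneg_s5 b).eq_or_lt with hb0 | hb0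
  · simp [eq_zero_of_l2_eq_zero hb0.symm]
  -- balance the two norms so that the arithmetic–geometric mean bound is tight
  have key := hR.abs_dotProduct_sub_le_sq_add_sq hU (a := l2 b • a) (b := l2 a • b)
    (fun i hi => by simp [ha i hi]) (fun i hi => by simp [hb i hi])
  rw [mulVec_smul, mulVec_smul, smul_dotProduct, dotProduct_smul, smul_dotProduct,
    dotProduct_smul, l2_smul (l2_nonneg_s5 b), l2_smul (l2_nonneg_s5 a)] at key
  simp only [smul_eq_mul] at key
  have hpos : 0 < l2 b * l2 a := mul_pos hb0 ha0
  rw [show l2 b * (l2 a * (Φ *ᵥ a ⬝ᵥ Φ *ᵥ b)) - l2 b * (l2 a * (a ⬝ᵥ b))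
      = (l2 b * l2 a) * (Φ *ᵥ a ⬝ᵥ Φ *ᵥ b - a ⬝ᵥ b) by ring,
    abs_mul, abs_of_pos hpos] at key
  exact (mul_le_mul_iff_right₀ hpos).1 (key.trans_eq (by ring))

lemma RIP.injective_colSub_mulVec (hR : RIP Φ K δ) (hδ : δ < 1) {S : Finset (Fin N)}
    (hS : S.card ≤ K) : Function.Injective (colSub Φ S).mulVec := by
  refine (injective_iff_map_eq_zero (colSub Φ S).mulVecLin).2 fun w hw => ?_
  have hlow := (hR _ (sparse_of_support_subset (fun i hi => extendByZero_of_notMem w hi) hS)).1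
  rw [mulVec_extendByZero, l2_extendByZero] at hlow
  change colSub Φ S *ᵥ w = 0 at hw
  rw [hw, l2_zero] at hlow
  exact eq_zero_of_l2_eq_zero (pow_eq_zero_iff two_ne_zero |>.1 (by nlinarith [l2_nonneg_s5 w]))

lemma RIP.abs_col_dotProduct_mulVec_le (hR : RIP Φ (K + 1) δ) {T : Finset (Fin N)}
    (hT : T.card ≤ K) {u : Fin N} (hu : u ∉ T) {v : Fin N → ℝ} (hv : ∀ i ∉ T, v i = 0) :
    |Φ.col u ⬝ᵥ Φ *ᵥ v| ≤ δ * l2 v := by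
  have h := hR.abs_dotProduct_sub_le_mul (U := insert u T)
    (by rw [Finset.card_insert_of_notMem hu]; omega)
    (a := Pi.single u 1) (fun i hi => Pi.single_eq_of_ne (by rintro rfl; simp at hi) 1)
    (fun i hi => hv i fun h => hi (Finset.mem_insert_of_mem h))
  rwa [mulVec_single_one, single_dotProduct, hv u hu, mul_zero, sub_zero, l2_single_one,
    one_mul] at h

end RIP

section Residual

variable {M N : ℕ} (Φ : Matrix (Fin M) (Fin N) ℝ) (S : Finset (Fin N))

lemma exists_resid_mulVec_eq (x : Fin N → ℝ) :
    ∃ z, resid Φ S (Φ *ᵥ x) = Φ *ᵥ (x - extendByZero S z) :=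
  ⟨_, by rw [mulVec_sub, mulVec_extendByZero, resid]⟩

lemma resid_dotProduct_colSub_mulVec (hG : IsUnit ((colSub Φ S)ᵀ * colSub Φ S).det)
    (y : Fin M → ℝ) (w : {i // i ∈ S} → ℝ) : resid Φ S y ⬝ᵥ colSub Φ S *ᵥ w = 0 := by
  rw [dotProduct_mulVec, ← mulVec_transpose, resid, mulVec_sub, mulVec_mulVec, mulVec_mulVec,
    mul_nonsing_inv _ hG, one_mulVec, sub_self, zero_dotProduct]

end Residual

lemma RIP.mul_l2_le_l2_restr_sdiff {M N K : ℕ} {Φ : Matrix (Fin M) (Fin N) ℝ} {δ : ℝ}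
    (hR : RIP Φ K δ) (hδ : 0 ≤ δ) {S T : Finset (Fin N)} (hT : T.card ≤ K) (hST : S ⊆ T)
    {v : Fin N → ℝ} (hv : ∀ i ∉ T, v i = 0)
    (horth : ∀ w, Φ *ᵥ v ⬝ᵥ colSub Φ S *ᵥ w = 0) :
    (1 - δ) * l2 v ≤ l2 (restr v (T \ S)) := by
  set g := extendByZero (T \ S) (restr v (T \ S))
  set w := extendByZero S (restr v S)
  have hw : |v ⬝ᵥ w| ≤ δ * (l2 v * l2 w) := by
    have h := hR.abs_dotProduct_sub_le_mul hT hv (b := w)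
      fun i hi => extendByZero_of_notMem _ fun h => hi (hST h)
    rwa [mulVec_extendByZero, horth, zero_sub, abs_neg] at h
  have hwv : l2 w ≤ l2 v := (l2_extendByZero _ _).trans_le (l2_restr_le v S)
  have hsplit : l2 v ^ 2 = v ⬝ᵥ g + v ⬝ᵥ w := by
    rw [l2_sq_s5, ← dotProduct_add, extendByZero_restr_add_extendByZero_restr hv]
  have hg : v ⬝ᵥ g ≤ l2 v * l2 (restr v (T \ S)) :=
    (dotProduct_le_l2_mul_l2 v g).trans_eq (by rw [l2_extendByZero])
  rcases (l2_nonneg_s5 v).eq_or_lt with hv0 | hv0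
  · rw [← hv0, mul_zero]
    exact l2_nonneg_s5 _
  refine le_of_mul_le_mul_right ?_ hv0
  nlinarith [le_abs_self (v ⬝ᵥ w), mul_le_mul_of_nonneg_left hwv (mul_nonneg hδ hv0.le)]

theorem gamma_upper_bound_general {M N K : ℕ} (Φ : Matrix (Fin M) (Fin N) ℝ)
    (x : Fin N → ℝ) (T S : Finset (Fin N)) (y : Fin M → ℝ)
    (hy : y = Φ.mulVec x) (hT : T.card = K) (hsupp : ∀ i, i ∉ T → x i = 0)
    (hS : S ⊂ T) (δK δK1 : ℝ) (hδK0 : 0 ≤ δK) (hδK1 : δK < 1)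
    (hδK10 : 0 ≤ δK1)
    (hRIPK : RIP Φ K δK) (hRIPK1 : RIP Φ (K + 1) δK1) :
    ∀ u, u ∉ T →
      |(fun i => Φ i u) ⬝ᵥ resid Φ S y| ≤
        (δK1 / (1 - δK)) * l2 (restr x (T \ S)) := by
  intro u hu
  have hST : S ⊆ T := hS.subset
  have hG : IsUnit ((colSub Φ S)ᵀ * colSub Φ S).det := by
    have hinj := hRIPK.injective_colSub_mulVec hδK1 ((card_le_card hST).trans hT.le)
    exact (PosDef.conjTranspose_mul_self _ hinj).det_pos.ne'.isUnit
  obtain ⟨z, hres⟩ := exists_resid_mulVec_eq Φ S x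
  set v := x - extendByZero S z
  have hv : ∀ i ∉ T, v i = 0 := fun i hi => by
    simp [v, hsupp i hi, extendByZero_of_notMem z fun h => hi (hST h)]
  have hvx : restr v (T \ S) = restr x (T \ S) := funext fun i => by
    simp [v, restr, extendByZero_of_notMem z (Finset.mem_sdiff.1 i.2).2]
  have horth : ∀ w, Φ *ᵥ v ⬝ᵥ colSub Φ S *ᵥ w = 0 := by
    rw [← hres]
    exact resid_dotProduct_colSub_mulVec Φ S hG _
  have hvT := hRIPK.mul_l2_le_l2_restr_sdiff hδK0 hT.le hST hv horth
  rw [hvx] at hvT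
  calc |(fun i => Φ i u) ⬝ᵥ resid Φ S y| = |Φ.col u ⬝ᵥ Φ *ᵥ v| := by rw [hy, hres]; rfl
    _ ≤ δK1 * l2 v := hRIPK1.abs_col_dotProduct_mulVec_le hT.le hu hv
    _ ≤ δK1 * (l2 (restr x (T \ S)) / (1 - δK)) := by
        gcongr
        rwa [le_div_iff₀ (sub_pos.2 hδK1), mul_comm]
    _ = (δK1 / (1 - δK)) * l2 (restr x (T \ S)) := by ring

theorem gamma_upper_bound {M N K : ℕ} (Φ : Matrix (Fin M) (Fin N) ℝ)
    (x : Fin N → ℝ) (T S : Finset (Fin N)) (y : Fin M → ℝ)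
    (hy : y = Φ.mulVec x) (hT : T.card = K) (hsupp : ∀ i, i ∉ T → x i = 0)
    (hS : S ⊂ T) (δK δK1 : ℝ) (hδK0 : 0 ≤ δK) (hδK1 : δK < 1)
    (hδK10 : 0 ≤ δK1) (hδK11 : δK1 < 1)
    (hRIPK : RIP Φ K δK) (hRIPK1 : RIP Φ (K + 1) δK1) :
    ∀ u, u ∉ T →
      |(fun i => Φ i u) ⬝ᵥ resid Φ S y| ≤
        (δK1 / (1 - δK)) * l2 (restr x (T \ S)) :=
  gamma_upper_bound_general Φ x T S y hy hT hsupp hS δK δK1 hδK0 hδK1 hδK10 hRIPK hRIPK1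
end
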